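/- arXiv:0806.1776 — 2 statements merged into one kernel-verified Lean document; each statement's English description precedes it below -/
import Mathlib

section
/- For the partial staircase L with sinks (m-l, l), (m-l+1, l-1), ..., (m-k, k) (so that paths in L correspond to subsets of [m] of size between k and l), the number of critical nodes is N(L) = C(m+1,2) - C(m+1-l,2) - C(k+1,2). -/
open Finset

/-- Pairs `{u<v}` and `{x<y}` (values in `ℕ ∪ {∞}`) are non-nesting if
neither `x<u<v<y` nor `u<x<y<v`. -/
def PairNonNesting (u v x y : WithTop ℕ) : Prop :=
  ¬ (x < u ∧ u < v ∧ v < y) ∧ ¬ (u < x ∧ x < y ∧ y < v)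

/-- Pairs `{u<v}` and `{x<y}` are non-crossing if neither `x<u<y<v` nor `u<x<v<y`. -/
def PairNonCrossing (u v x y : WithTop ℕ) : Prop :=
  ¬ (x < u ∧ u < y ∧ y < v) ∧ ¬ (u < x ∧ x < v ∧ v < y)

/-- Remove one common entry (equal entries in equal positions) from the two lists. -/
def stripOnce (I J : List ℕ) : Option (List ℕ × List ℕ) :=
  ((List.range (min I.length J.length)).find? (fun s => I.getD s 0 == J.getD s 0)).map
    (fun s => (I.eraseIdx s, J.eraseIdx s))

def stripAux : ℕ → List ℕ → List ℕ → List ℕ × List ℕ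
  | 0, I, J => (I, J)
  | n+1, I, J =>
    match stripOnce I J with
    | none => (I, J)
    | some (I', J') => stripAux n I' J'

/-- Repeatedly remove the "common part" (equal entries in equal positions). -/
def strip (I J : List ℕ) : List ℕ × List ℕ := stripAux I.length I J

/-- The `s`-th entry (0-indexed) of the list, viewed in `ℕ ∪ {∞}`, with `∞` beyond the end. -/
def entry (l : List ℕ) (s : ℕ) : WithTop ℕ :=
  (l.map (fun a => (a : WithTop ℕ))).getD s ⊤

/-- Non-nesting condition on sorted lists `I`, `J` with `I` the shorter one:
after removing the common part, all consecutive-difference pairs are non-nesting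
(with the `∞` convention for the shorter list). -/
def ListsNonNesting (I J : List ℕ) : Prop :=
  ∀ s : ℕ, s + 1 < (strip I J).2.length →
    PairNonNesting (entry (strip I J).1 s) (entry (strip I J).1 (s+1))
      (entry (strip I J).2 s) (entry (strip I J).2 (s+1))

def ListsNonCrossing (I J : List ℕ) : Prop :=
  ∀ s : ℕ, s + 1 < (strip I J).2.length →
    PairNonCrossing (entry (strip I J).1 s) (entry (strip I J).1 (s+1))
      (entry (strip I J).2 s) (entry (strip I J).2 (s+1))

/-- The increasing list of elements of a finite set. -/
def sortedList (I : Finset ℕ) : List ℕ := I.sort (· ≤ ·)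

/-- Subsets `I`, `J` are non-nesting. -/
def SetsNonNesting (I J : Finset ℕ) : Prop :=
  if I.card ≤ J.card then ListsNonNesting (sortedList I) (sortedList J)
  else ListsNonNesting (sortedList J) (sortedList I)

/-- Subsets `I`, `J` are non-crossing. -/
def SetsNonCrossing (I J : Finset ℕ) : Prop :=
  if I.card ≤ J.card then ListsNonCrossing (sortedList I) (sortedList J)
  else ListsNonCrossing (sortedList J) (sortedList I)

/-- `A ≺ B`: every element of `A` is smaller than every element of `B`. -/
def Precedes (A B : Finset ℕ) : Prop := ∀ a ∈ A, ∀ b ∈ B, a < b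

/-- Leclerc–Zelevinsky weak separation. -/
def WeaklySeparated (I J : Finset ℕ) : Prop :=
  (J.card ≤ I.card ∧ ∃ J₁ J₂ : Finset ℕ, Disjoint J₁ J₂ ∧ J \ I = J₁ ∪ J₂ ∧
    Precedes J₁ (I \ J) ∧ Precedes (I \ J) J₂) ∨
  (I.card ≤ J.card ∧ ∃ I₁ I₂ : Finset ℕ, Disjoint I₁ I₂ ∧ I \ J = I₁ ∪ I₂ ∧
    Precedes I₁ (J \ I) ∧ Precedes (J \ I) I₂)

/-- Number of north steps of the path `p(I)` among its first `k` steps. -/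
def northCount (I : Finset ℕ) (k : ℕ) : ℕ := (I.filter (fun i => i ≤ k)).card

/-- Paths `p(I)`, `p(J)` are non-crossing: one lies weakly northwest of the other
along their entire length. -/
def PathsNonCrossing (I J : Finset ℕ) : Prop :=
  (∀ k, northCount J k ≤ northCount I k) ∨ (∀ k, northCount I k ≤ northCount J k)

/-- `[k₁, k₂]` (in step coordinates) is a proper common part of the paths `p(I)`, `p(J)`
of length `m`: a maximal shared connected subpath containing neither the source nor an
endpoint.  Maximality is expressed by the two paths separating just before `k₁` and just
after `k₂`. -/
def ProperCommonPart (m : ℕ) (I J : Finset ℕ) (k₁ k₂ : ℕ) : Prop :=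
  1 ≤ k₁ ∧ k₁ ≤ k₂ ∧ k₂ < m ∧
  (∀ k, k₁ ≤ k → k ≤ k₂ → northCount I k = northCount J k) ∧
  northCount I (k₁ - 1) ≠ northCount J (k₁ - 1) ∧
  northCount I (k₂ + 1) ≠ northCount J (k₂ + 1)

/-- Paths `p(I)`, `p(J)` are non-kissing: at every proper common part each path leaves
in the same direction in which it entered (the common part is a crossing, not a kiss). -/
def PathsNonKissing (m : ℕ) (I J : Finset ℕ) : Prop :=
  ∀ k₁ k₂, ProperCommonPart m I J k₁ k₂ → ((k₁ ∈ I) ↔ (k₂ + 1 ∈ I))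

/-- Number of north steps among the first `k` steps, for `k ∈ ℤ` (zero for `k ≤ 0`). -/
def northCountZ (I : Finset ℕ) (k : ℤ) : ℤ := (northCount I k.toNat : ℤ)

/-- The indicator Gelfand–Tsetlin pattern of the path `p(I)`: the cell
`[x,x+1] × [y,y+1]` gets a `1` if it lies southeast of the path and `0` if northwest. -/
noncomputable def Tpat (I : Finset ℕ) (x y : ℤ) : ℝ :=
  if y + 1 ≤ northCountZ I (x + y + 1) then 1 else 0

/-- `(x,y)` is a node of the partial staircase `L ⊆ L_m` with set of sink heights `A`:
it lies (weakly) southwest of some sink `(m-j, j)`, `j ∈ A`. -/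
def NodeL (m : ℕ) (A : Finset ℕ) (x y : ℤ) : Prop :=
  0 ≤ x ∧ 0 ≤ y ∧ ∃ j ∈ A, x + j ≤ m ∧ y ≤ j

/-- Same, with natural-number coordinates. -/
def InL (m : ℕ) (A : Finset ℕ) (x y : ℕ) : Prop :=
  ∃ j ∈ A, x + j ≤ m ∧ y ≤ j

/-- The path `p(I)` is contained in the partial staircase with sink heights `A`. -/
def PathInL (m : ℕ) (A : Finset ℕ) (I : Finset ℕ) : Prop :=
  ∀ k ≤ m, InL m A (k - northCount I k) (northCount I k)

/-- A critical node has edges of `L` leaving it toward both the north and the east. -/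
def CriticalNode (m : ℕ) (A : Finset ℕ) (x y : ℕ) : Prop :=
  InL m A (x + 1) y ∧ InL m A x (y + 1)

open Classical in
/-- `N(L)`: the number of critical nodes of the partial staircase. -/
noncomputable def numCritical (m : ℕ) (A : Finset ℕ) : ℕ :=
  ((Finset.range (m+1) ×ˢ Finset.range (m+1)).filter
    (fun p => CriticalNode m A p.1 p.2)).card

lemma choose2_succ (n : ℕ) : (n+1).choose 2 = n.choose 2 + n := by
  rw [Nat.choose_succ_succ]
  simp [Nat.choose_one_right]
  omega

lemma choose2_add (a b : ℕ) :
    (a+b+1).choose 2 = (a+1).choose 2 + (b+1).choose 2 + a*b := by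
  induction a with
  | zero => simp
  | succ a ih =>
    have h0 : a + 1 + b = a + b + 1 := by ring
    rw [h0, choose2_succ (a+b+1), ih, choose2_succ (a+1)]
    ring

lemma inL_iff (m k l x y : ℕ) (hkl : k ≤ l) (hlm : l ≤ m) :
    InL m (Finset.Icc k l) x y ↔ y ≤ l ∧ x + max y k ≤ m := by
  constructor
  · rintro ⟨j, hj, h1, h2⟩
    simp only [Finset.mem_Icc] at hj
    have h3 : max y k ≤ j := max_le h2 hj.1
    exact ⟨by omega, by omega⟩
  · rintro ⟨h1, h2⟩
    exact ⟨max y k, Finset.mem_Icc.2 ⟨le_max_right _ _, max_le h1 hkl⟩, by omega,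
      le_max_left _ _⟩

lemma crit_iff (m k l x y : ℕ) (hkl : k ≤ l) (hlm : l ≤ m) :
    CriticalNode m (Finset.Icc k l) x y ↔ y < l ∧ x + max y k < m := by
  unfold CriticalNode
  rw [inL_iff m k l _ _ hkl hlm, inL_iff m k l _ _ hkl hlm]
  have hmax : max (y+1) k ≤ max y k + 1 :=
    max_le (by have := le_max_left y k; omega) (by have := le_max_right y k; omega)
  have hy : y ≤ max y k := le_max_left y k
  constructor
  · rintro ⟨⟨_, h2⟩, ⟨h3, _⟩⟩
    omega
  · rintro ⟨h1, h2⟩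
    exact ⟨⟨by omega, by omega⟩, by omega, by omega⟩

lemma sum_key (m k l : ℕ) (hkl : k ≤ l) (hlm : l ≤ m) :
    (∑ y ∈ Finset.range l, (m - max y k)) + (m+1-l).choose 2 + (k+1).choose 2
      = (m+1).choose 2 := by
  induction l, hkl using Nat.le_induction with
  | base =>
    have hsum : ∑ y ∈ Finset.range k, (m - max y k) = k * (m - k) := by
      rw [Finset.sum_congr rfl (fun y hy => ?_), Finset.sum_const, Finset.card_range,
        smul_eq_mul]
      have : max y k = k := max_eq_right (le_of_lt (Finset.mem_range.1 hy))
      rw [this]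
    rw [hsum]
    have h := choose2_add (m - k) k
    have h2 : m - k + k + 1 = m + 1 := by omega
    have h3 : m + 1 - k = m - k + 1 := by omega
    rw [h2] at h
    rw [h3]
    have := Nat.mul_comm k (m - k)
    omega
  | succ l hkl ih =>
    have hlm' : l ≤ m := by omega
    have ih' := ih hlm'
    rw [Finset.sum_range_succ]
    have hml : max l k = l := max_eq_left hkl
    rw [hml]
    have h1 : m + 1 - l = (m - l) + 1 := by omega
    have h2 : m + 1 - (l + 1) = m - l := by omega
    rw [h1] at ih'
    rw [h2]
    have := choose2_succ (m - l)
    omega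

/-- For the partial staircase `L` with sinks `(m-l,l), (m-l+1,l-1), …, (m-k,k)`
(sink heights `k, k+1, …, l`), the number of critical nodes is
`N(L) = C(m+1,2) - C(m+1-l,2) - C(k+1,2)`. -/
theorem numCritical_Icc (m k l : ℕ) (hkl : k ≤ l) (hlm : l ≤ m) :
    numCritical m (Finset.Icc k l) =
      (m+1).choose 2 - (m+1-l).choose 2 - (k+1).choose 2 := by
  classical
  have key : numCritical m (Finset.Icc k l) = ∑ y ∈ Finset.range l, (m - max y k) := by
    unfold numCritical
    have hbij : ((Finset.range (m+1) ×ˢ Finset.range (m+1)).filter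
        (fun p => CriticalNode m (Finset.Icc k l) p.1 p.2)).card
        = ((Finset.range l).sigma fun y => Finset.range (m - max y k)).card := by
      apply Finset.card_bij (fun p _ => (⟨p.2, p.1⟩ : Σ _ : ℕ, ℕ))
      · rintro ⟨x, y⟩ hp
        simp only [Finset.mem_filter, Finset.mem_product, Finset.mem_range] at hp
        obtain ⟨⟨hx, hy⟩, hc⟩ := hp
        rw [crit_iff m k l x y hkl hlm] at hc
        simp only [Finset.mem_sigma, Finset.mem_range]
        exact ⟨hc.1, by omega⟩
      · rintro ⟨x, y⟩ _ ⟨x', y'⟩ _ h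
        simp only [Sigma.mk.inj_iff, heq_eq_eq] at h
        exact Prod.ext h.2 h.1
      · rintro ⟨y, x⟩ hb
        simp only [Finset.mem_sigma, Finset.mem_range] at hb
        refine ⟨(x, y), ?_, rfl⟩
        simp only [Finset.mem_filter, Finset.mem_product, Finset.mem_range]
        have h1 := le_max_left y k
        obtain ⟨hy, hx⟩ := hb
        refine ⟨⟨by omega, by omega⟩, (crit_iff m k l x y hkl hlm).2 ⟨hy, by omega⟩⟩
    rw [hbij, Finset.card_sigma]
    simp
  have := sum_key m k l hkl hlm
  omega
end

section
/- For the weight function w(T_p) = Σ_{1≤i<j≤m} δ_{ij}(p) ε^{j-i} with ε = 1/C(m,2): among all finite multisets R of lattice paths in L with Σ_{r∈R} T_r equal to a fixed pattern S, any multiset minimizing Σ_{r∈R} w(T_r) is pairwise non-kissing. -/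
open Finset

/-- The weight `w(T_p) = Σ_{1 ≤ i < j ≤ m} δ_{ij}(p) ε^{j-i}` with `ε = 1/C(m,2)`. -/
noncomputable def wgt (m : ℕ) (I : Finset ℕ) : ℝ :=
  ∑ q ∈ (Finset.Icc 1 m ×ˢ Finset.Icc 1 m).filter (fun q => q.1 < q.2),
    (if (q.1 ∈ I ↔ q.2 ∈ I) then 0 else (1 / (m.choose 2 : ℝ)) ^ (q.2 - q.1))

/-! Exchange argument.  If `p(I)` and `p(J)` kiss along the proper common part `[k₁, k₂]`,
swapping their tails after step `k₂` leaves the sum of the indicator patterns unchanged.  For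
each of the two paths the letters `k₁` and `k₂ + 1` differ before the swap and agree after it,
which saves `2 ε ^ (k₂ + 1 - k₁)`.  Any other pair `i < j` whose contribution changes straddles
`k₂`, with `I` and `J` differing at both `i` and `j`; as they agree strictly between `k₁` and
`k₂`, this forces `i ≤ k₁`, `k₂ + 1 ≤ j` and `(i, j) ≠ (k₁, k₂ + 1)`.  Each such pair costs at
most `2 ε ^ (k₂ + 2 - k₁)`, and there are fewer than `C(m, 2) = 1 / ε` of them. -/

def splice (I J : Finset ℕ) (k : ℕ) : Finset ℕ :=
  I.filter (· ≤ k) ∪ J.filter (k < ·)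

theorem mem_splice {I J : Finset ℕ} {k x : ℕ} :
    x ∈ splice I J k ↔ if x ≤ k then x ∈ I else x ∈ J := by
  simp only [splice, mem_union, mem_filter]
  split_ifs <;> grind

theorem mem_splice_of_le {I J : Finset ℕ} {k x : ℕ} (hx : x ≤ k) :
    x ∈ splice I J k ↔ x ∈ I := by
  rw [mem_splice, if_pos hx]

theorem mem_splice_of_lt {I J : Finset ℕ} {k x : ℕ} (hx : k < x) :
    x ∈ splice I J k ↔ x ∈ J := by
  rw [mem_splice, if_neg (not_le.2 hx)]

theorem splice_subset {I J s : Finset ℕ} (hI : I ⊆ s) (hJ : J ⊆ s) (k : ℕ) :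
    splice I J k ⊆ s :=
  union_subset ((filter_subset _ _).trans hI) ((filter_subset _ _).trans hJ)

theorem northCount_eq_add_card_filter (X : Finset ℕ) {k n : ℕ} (hkn : k ≤ n) :
    northCount X n = northCount X k + #(X.filter fun a => k < a ∧ a ≤ n) := by
  unfold northCount
  rw [← card_union_of_disjoint (disjoint_filter.2 fun _ _ h h' => by omega)]
  congr 1
  ext a
  simp only [mem_filter, mem_union]
  grind

theorem northCount_succ (X : Finset ℕ) (i : ℕ) :
    northCount X (i + 1) = northCount X i + if i + 1 ∈ X then 1 else 0 := by
  rw [northCount_eq_add_card_filter X (Nat.le_add_right i 1)]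
  congr 1
  have hstep : (X.filter fun a => i < a ∧ a ≤ i + 1) = X.filter (· = i + 1) := by
    ext a
    simp only [mem_filter]
    exact and_congr_right fun _ => by omega
  rw [hstep, filter_eq']
  split_ifs <;> rfl

theorem northCount_splice {I J : Finset ℕ} {k : ℕ} (hk : northCount I k = northCount J k)
    (n : ℕ) : northCount (splice I J k) n = if n ≤ k then northCount I n else northCount J n := by
  have head : ∀ n ≤ k, northCount (splice I J k) n = northCount I n := by
    intro n hn
    unfold northCount
    congr 1
    ext a
    simp only [mem_filter, mem_splice]
    grind
  split_ifs with hn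
  · exact head n hn
  · rw [northCount_eq_add_card_filter _ (le_of_not_ge hn), head k le_rfl, hk,
      northCount_eq_add_card_filter J (le_of_not_ge hn)]
    congr 2
    ext a
    simp only [mem_filter, mem_splice]
    grind

theorem Tpat_splice_add_Tpat_splice {I J : Finset ℕ} {k : ℕ}
    (hk : northCount I k = northCount J k) (x y : ℤ) :
    Tpat (splice I J k) x y + Tpat (splice J I k) x y = Tpat I x y + Tpat J x y := by
  unfold Tpat northCountZ
  rw [northCount_splice hk, northCount_splice hk.symm]
  split_ifs <;> ring

theorem PathInL.splice {m : ℕ} {A I J : Finset ℕ} {k : ℕ} (hI : PathInL m A I)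
    (hJ : PathInL m A J) (hk : northCount I k = northCount J k) :
    PathInL m A (splice I J k) := by
  intro n hn
  rw [northCount_splice hk]
  split_ifs
  exacts [hI n hn, hJ n hn]

theorem northCount_succ_eq_iff {I J : Finset ℕ} {i : ℕ} (h : northCount I i = northCount J i) :
    northCount I (i + 1) = northCount J (i + 1) ↔ (i + 1 ∈ I ↔ i + 1 ∈ J) := by
  rw [northCount_succ, northCount_succ, h]
  split_ifs <;> simp_all

theorem northCount_eq_iff_of_succ {I J : Finset ℕ} {i : ℕ}
    (h : northCount I (i + 1) = northCount J (i + 1)) :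
    northCount I i = northCount J i ↔ (i + 1 ∈ I ↔ i + 1 ∈ J) := by
  rw [northCount_succ, northCount_succ] at h
  split_ifs at h <;> grind

namespace ProperCommonPart

variable {m : ℕ} {I J : Finset ℕ} {k₁ k₂ : ℕ}

theorem northCount_eq_right (h : ProperCommonPart m I J k₁ k₂) :
    northCount I k₂ = northCount J k₂ :=
  h.2.2.2.1 k₂ h.2.1 le_rfl

theorem mem_iff_of_lt (h : ProperCommonPart m I J k₁ k₂) {i : ℕ} (hi : k₁ < i) (hi' : i ≤ k₂) :
    i ∈ I ↔ i ∈ J := by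
  obtain ⟨-, -, -, hcommon, -, -⟩ := h
  obtain ⟨t, rfl⟩ : ∃ t, i = t + 1 := ⟨i - 1, by omega⟩
  exact (northCount_succ_eq_iff (hcommon t (by omega) (by omega))).1 (hcommon (t + 1) hi.le hi')

theorem not_mem_iff_left (h : ProperCommonPart m I J k₁ k₂) : ¬(k₁ ∈ I ↔ k₁ ∈ J) := by
  obtain ⟨h1, h12, -, hcommon, hleft, -⟩ := h
  obtain ⟨t, rfl⟩ : ∃ t, k₁ = t + 1 := ⟨k₁ - 1, by omega⟩
  rw [← northCount_eq_iff_of_succ (hcommon (t + 1) le_rfl h12)]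
  simpa using hleft

theorem not_mem_iff_right (h : ProperCommonPart m I J k₁ k₂) :
    ¬(k₂ + 1 ∈ I ↔ k₂ + 1 ∈ J) := by
  rw [← northCount_succ_eq_iff h.northCount_eq_right]
  exact h.2.2.2.2.2

end ProperCommonPart

noncomputable def pairTerm (ε : ℝ) (X : Finset ℕ) (q : ℕ × ℕ) : ℝ :=
  if (q.1 ∈ X ↔ q.2 ∈ X) then 0 else ε ^ (q.2 - q.1)

def orderedPairs (m : ℕ) : Finset (ℕ × ℕ) :=
  (Icc 1 m ×ˢ Icc 1 m).filter fun q => q.1 < q.2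

theorem card_orderedPairs (m : ℕ) : #(orderedPairs m) = m.choose 2 := by
  rw [orderedPairs, card_product_filter_lt, Nat.card_Icc, Nat.add_sub_cancel]

theorem wgt_eq_sum_pairTerm (m : ℕ) (X : Finset ℕ) :
    wgt m X = ∑ q ∈ orderedPairs m, pairTerm (1 / (m.choose 2 : ℝ)) X q :=
  rfl

theorem pairTerm_congr {ε : ℝ} {X Y : Finset ℕ} {i j : ℕ} (hi : i ∈ X ↔ i ∈ Y)
    (hj : j ∈ X ↔ j ∈ Y) : pairTerm ε X (i, j) = pairTerm ε Y (i, j) := by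
  simp only [pairTerm, hi, hj]

theorem pairTerm_nonneg {ε : ℝ} (hε : 0 ≤ ε) (X : Finset ℕ) (q : ℕ × ℕ) : 0 ≤ pairTerm ε X q := by
  unfold pairTerm
  split_ifs
  exacts [le_rfl, pow_nonneg hε _]

theorem pairTerm_le {ε : ℝ} (hε : 0 ≤ ε) (X : Finset ℕ) (q : ℕ × ℕ) :
    pairTerm ε X q ≤ ε ^ (q.2 - q.1) := by
  unfold pairTerm
  split_ifs
  exacts [pow_nonneg hε _, le_rfl]

theorem pairTerm_splice_add_pairTerm_splice {ε : ℝ} {I J : Finset ℕ} {k i j : ℕ} (hij : i < j)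
    (hq : ¬(i ≤ k ∧ k < j ∧ ¬(i ∈ I ↔ i ∈ J) ∧ ¬(j ∈ I ↔ j ∈ J))) :
    pairTerm ε (splice I J k) (i, j) + pairTerm ε (splice J I k) (i, j) =
      pairTerm ε I (i, j) + pairTerm ε J (i, j) := by
  rcases le_or_gt j k with hj | hj
  · rw [pairTerm_congr (mem_splice_of_le (by omega)) (mem_splice_of_le hj),
      pairTerm_congr (mem_splice_of_le (by omega)) (mem_splice_of_le hj)]
  rcases le_or_gt i k with hi | hi
  · by_cases hdi : i ∈ I ↔ i ∈ J
    · rw [pairTerm_congr ((mem_splice_of_le hi).trans hdi) (mem_splice_of_lt hj),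
        pairTerm_congr ((mem_splice_of_le hi).trans hdi.symm) (mem_splice_of_lt hj), add_comm]
    · have hdj : j ∈ I ↔ j ∈ J := by tauto
      rw [pairTerm_congr (mem_splice_of_le hi) ((mem_splice_of_lt hj).trans hdj.symm),
        pairTerm_congr (mem_splice_of_le hi) ((mem_splice_of_lt hj).trans hdj)]
  · rw [pairTerm_congr (mem_splice_of_lt hi) (mem_splice_of_lt hj),
      pairTerm_congr (mem_splice_of_lt hi) (mem_splice_of_lt hj), add_comm]

theorem pairTerm_splice_add_pairTerm_splice_le {ε : ℝ} (hε0 : 0 ≤ ε) (hε1 : ε ≤ 1)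
    {I J : Finset ℕ} {k₁ k₂ i j : ℕ} (hmid : ∀ i, k₁ < i → i ≤ k₂ → (i ∈ I ↔ i ∈ J))
    (hij : i < j) (hne : (i, j) ≠ (k₁, k₂ + 1)) :
    pairTerm ε (splice I J k₂) (i, j) + pairTerm ε (splice J I k₂) (i, j) ≤
      pairTerm ε I (i, j) + pairTerm ε J (i, j) + 2 * ε ^ (k₂ + 2 - k₁) := by
  by_cases hq : i ≤ k₂ ∧ k₂ < j ∧ ¬(i ∈ I ↔ i ∈ J) ∧ ¬(j ∈ I ↔ j ∈ J)
  · obtain ⟨hi, hj, hdi, -⟩ := hq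
    have hik₁ : i ≤ k₁ := by
      by_contra hlt
      exact hdi (hmid i (by omega) hi)
    have hne' : ¬(i = k₁ ∧ j = k₂ + 1) := fun h => hne (by rw [h.1, h.2])
    have hpow : ε ^ (j - i) ≤ ε ^ (k₂ + 2 - k₁) := pow_le_pow_of_le_one hε0 hε1 (by omega)
    linarith [pairTerm_le hε0 (splice I J k₂) (i, j), pairTerm_le hε0 (splice J I k₂) (i, j),
      pairTerm_nonneg hε0 I (i, j), pairTerm_nonneg hε0 J (i, j)]
  · rw [pairTerm_splice_add_pairTerm_splice hij hq]
    linarith [pow_nonneg hε0 (k₂ + 2 - k₁)]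

theorem pairTerm_splice_add_pairTerm_splice_kiss (ε : ℝ) {I J : Finset ℕ} {k₁ k₂ : ℕ}
    (h12 : k₁ ≤ k₂) (hd₁ : ¬(k₁ ∈ I ↔ k₁ ∈ J)) (hd₂ : ¬(k₂ + 1 ∈ I ↔ k₂ + 1 ∈ J))
    (hkiss : ¬(k₁ ∈ I ↔ k₂ + 1 ∈ I)) :
    pairTerm ε (splice I J k₂) (k₁, k₂ + 1) + pairTerm ε (splice J I k₂) (k₁, k₂ + 1) +
        2 * ε ^ (k₂ + 1 - k₁) = pairTerm ε I (k₁, k₂ + 1) + pairTerm ε J (k₁, k₂ + 1) := by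
  have hk₂ : k₂ < k₂ + 1 := Nat.lt_succ_self k₂
  simp only [pairTerm, mem_splice_of_le h12, mem_splice_of_lt hk₂]
  rw [if_pos (by tauto), if_pos (by tauto), if_neg hkiss, if_neg (by tauto)]
  ring

theorem Finset.sum_lt_sum_of_le_add_of_add_le {ι K : Type*} [Field K] [LinearOrder K]
    [IsStrictOrderedRing K] [DecidableEq ι] {s : Finset ι} {f g : ι → K} {a : ι} {η θ : K}
    (ha : a ∈ s) (hle : ∀ q ∈ s.erase a, f q ≤ g q + η) (hgain : f a + θ ≤ g a)
    (hηθ : #(s.erase a) * η < θ) :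
    ∑ q ∈ s, f q < ∑ q ∈ s, g q := by
  have hrest := sum_le_sum hle
  rw [sum_add_distrib, sum_const, nsmul_eq_mul] at hrest
  rw [← add_sum_erase s f ha, ← add_sum_erase s g ha]
  linarith

theorem wgt_splice_add_wgt_splice_lt {m k₁ k₂ : ℕ} {I J : Finset ℕ}
    (h1 : 1 ≤ k₁) (h12 : k₁ ≤ k₂) (h2 : k₂ < m)
    (hmid : ∀ i, k₁ < i → i ≤ k₂ → (i ∈ I ↔ i ∈ J))
    (hd₁ : ¬(k₁ ∈ I ↔ k₁ ∈ J)) (hd₂ : ¬(k₂ + 1 ∈ I ↔ k₂ + 1 ∈ J))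
    (hkiss : ¬(k₁ ∈ I ↔ k₂ + 1 ∈ I)) :
    wgt m (splice I J k₂) + wgt m (splice J I k₂) < wgt m I + wgt m J := by
  set ε : ℝ := 1 / (m.choose 2 : ℝ) with hε
  have hC : (1 : ℝ) ≤ m.choose 2 := by exact_mod_cast Nat.choose_pos (by omega)
  have hε0 : 0 < ε := by positivity
  have hε1 : ε ≤ 1 := by rw [hε, div_le_one (by linarith)]; exact hC
  have hq₀ : (k₁, k₂ + 1) ∈ orderedPairs m := by
    simp only [orderedPairs, mem_filter, mem_product, mem_Icc]
    omega
  have hcard : (#((orderedPairs m).erase (k₁, k₂ + 1)) : ℝ) * ε < 1 := by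
    rw [hε, mul_one_div, div_lt_one (by linarith), ← card_orderedPairs]
    exact_mod_cast card_erase_lt_of_mem hq₀
  simp only [wgt_eq_sum_pairTerm, ← sum_add_distrib]
  refine sum_lt_sum_of_le_add_of_add_le hq₀ (η := 2 * ε ^ (k₂ + 2 - k₁))
    (θ := 2 * ε ^ (k₂ + 1 - k₁)) ?_
    (pairTerm_splice_add_pairTerm_splice_kiss ε h12 hd₁ hd₂ hkiss).le ?_
  · rintro ⟨i, j⟩ hq
    obtain ⟨hne, hmem⟩ := mem_erase.1 hq
    simp only [orderedPairs, mem_filter] at hmem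
    exact pairTerm_splice_add_pairTerm_splice_le hε0.le hε1 hmid hmem.2 hne
  · calc (#((orderedPairs m).erase (k₁, k₂ + 1)) : ℝ) * (2 * ε ^ (k₂ + 2 - k₁))
        = (#((orderedPairs m).erase (k₁, k₂ + 1)) * ε) * (2 * ε ^ (k₂ + 1 - k₁)) := by
          rw [show k₂ + 2 - k₁ = k₂ + 1 - k₁ + 1 by omega, pow_succ]
          ring
      _ < 1 * (2 * ε ^ (k₂ + 1 - k₁)) := by gcongr
      _ = 2 * ε ^ (k₂ + 1 - k₁) := one_mul _

theorem min_weight_nonKissing_general (m : ℕ) (A : Finset ℕ)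
    (R : Multiset (Finset ℕ))
    (hR : ∀ I ∈ R, I ⊆ Finset.Icc 1 m ∧ PathInL m A I)
    (hmin : ∀ R' : Multiset (Finset ℕ),
      (∀ I ∈ R', I ⊆ Finset.Icc 1 m ∧ PathInL m A I) →
      (∀ x y : ℤ, (R'.map (fun I => Tpat I x y)).sum = (R.map (fun I => Tpat I x y)).sum) →
      (R.map (wgt m)).sum ≤ (R'.map (wgt m)).sum) :
    ∀ I ∈ R, ∀ J ∈ R, PathsNonKissing m I J := by
  intro I hI J hJ k₁ k₂ hpart
  by_contra hkiss
  have hk := hpart.northCount_eq_right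
  have hne : J ≠ I := fun h => hpart.not_mem_iff_left (by rw [h])
  obtain ⟨T, rfl⟩ := Multiset.exists_cons_of_mem hI
  obtain ⟨S, rfl⟩ := Multiset.exists_cons_of_mem ((Multiset.mem_cons.1 hJ).resolve_left hne)
  obtain ⟨hIs, hIL⟩ := hR I hI
  obtain ⟨hJs, hJL⟩ := hR J hJ
  have hR' : ∀ K ∈ splice I J k₂ ::ₘ splice J I k₂ ::ₘ S,
      K ⊆ Icc 1 m ∧ PathInL m A K := by
    simp only [Multiset.mem_cons]
    rintro K (rfl | rfl | hK)
    · exact ⟨splice_subset hIs hJs k₂, hIL.splice hJL hk⟩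
    · exact ⟨splice_subset hJs hIs k₂, hJL.splice hIL hk.symm⟩
    · exact hR K (by simp [hK])
  have hpat : ∀ x y : ℤ,
      ((splice I J k₂ ::ₘ splice J I k₂ ::ₘ S).map fun K => Tpat K x y).sum =
        ((I ::ₘ J ::ₘ S).map fun K => Tpat K x y).sum := by
    intro x y
    simp only [Multiset.map_cons, Multiset.sum_cons]
    linarith [Tpat_splice_add_Tpat_splice hk x y]
  have hle := hmin _ hR' hpat
  simp only [Multiset.map_cons, Multiset.sum_cons] at hle
  linarith [wgt_splice_add_wgt_splice_lt hpart.1 hpart.2.1 hpart.2.2.1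
    (fun i => hpart.mem_iff_of_lt) hpart.not_mem_iff_left hpart.not_mem_iff_right hkiss]

/-- Among all finite multisets of lattice paths in `L` whose indicator patterns sum to a
fixed pattern, any multiset minimizing the total weight is pairwise non-kissing. -/
theorem min_weight_nonKissing (m : ℕ) (A : Finset ℕ) (hA : A ⊆ Finset.range (m+1))
    (R : Multiset (Finset ℕ))
    (hR : ∀ I ∈ R, I ⊆ Finset.Icc 1 m ∧ PathInL m A I)
    (hmin : ∀ R' : Multiset (Finset ℕ),
      (∀ I ∈ R', I ⊆ Finset.Icc 1 m ∧ PathInL m A I) →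
      (∀ x y : ℤ, (R'.map (fun I => Tpat I x y)).sum = (R.map (fun I => Tpat I x y)).sum) →
      (R.map (wgt m)).sum ≤ (R'.map (wgt m)).sum) :
    ∀ I ∈ R, ∀ J ∈ R, PathsNonKissing m I J :=
  min_weight_nonKissing_general m A R hR hmin
end
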